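/- arXiv:1809.03424 — 3 statements merged into one kernel-verified Lean document; each statement's English description precedes it below -/
import Mathlib

section
/- Let p, q, r be integers and define V(n) = p⌊nφ⌋ + qn + r for n ≥ 1, and let A(n) = ⌊nφ⌋ and B(n) = ⌊nφ²⌋ = A(n) + n. Then for all n ≥ 1, V(A(n)) = (p+q)·⌊nφ⌋ + p·n + (r − p) and V(B(n)) = (2p+q)·⌊nφ⌋ + (p+q)·n + r. -/
noncomputable def phi : ℝ := (1 + Real.sqrt 5) / 2

/-! Write `x = nφ`, `a = ⌊x⌋` and `f = x - a`. Since `x (φ - 1) = n`,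
`a φ = (a + n - 1) + (1 - f (φ - 1))` and `(a + n) φ = (2a + n) + f (2 - φ)`.
As `φ` is irrational, `0 < f < 1` for `n ≥ 1`, so both error terms lie in `[0, 1)` and
`⌊aφ⌋ = a + n - 1`, `⌊(a + n)φ⌋ = 2a + n`, while `B(n) = ⌊nφ + n⌋ = a + n`. -/

lemma phi_eq_goldenRatio : phi = Real.goldenRatio := rfl

lemma one_lt_phi : 1 < phi := Real.one_lt_goldenRatio

lemma phi_lt_two : phi < 2 := Real.goldenRatio_lt_two

lemma phi_mul_phi_sub_one : phi * (phi - 1) = 1 := by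
  rw [phi_eq_goldenRatio]
  linear_combination Real.goldenRatio_sq

lemma floor_natCast_mul_phi_sq (n : ℕ) : ⌊(n : ℝ) * phi ^ 2⌋ = ⌊(n : ℝ) * phi⌋ + n := by
  rw [phi_eq_goldenRatio, Real.goldenRatio_sq, mul_add_one, Int.floor_add_natCast]

lemma one_le_floor_natCast_mul_phi {n : ℕ} (hn : n ≠ 0) : 1 ≤ ⌊(n : ℝ) * phi⌋ := by
  have h1 : (1 : ℝ) ≤ n := by exact_mod_cast Nat.one_le_iff_ne_zero.mpr hn
  rw [Int.le_floor, Int.cast_one]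
  nlinarith [one_lt_phi]

lemma fract_natCast_mul_phi_pos {n : ℕ} (hn : n ≠ 0) : 0 < Int.fract ((n : ℝ) * phi) :=
  Int.fract_pos.mpr <| (Real.goldenRatio_irrational.natCast_mul hn).ne_int _

lemma floor_floor_natCast_mul_phi_mul_phi {n : ℕ} (hn : n ≠ 0) :
    ⌊(⌊(n : ℝ) * phi⌋ : ℝ) * phi⌋ = ⌊(n : ℝ) * phi⌋ + n - 1 := by
  set x := (n : ℝ) * phi
  have hf := fract_natCast_mul_phi_pos hn
  have hf1 := Int.fract_lt_one x
  have key : (⌊x⌋ : ℝ) * phi = ((⌊x⌋ + n - 1 : ℤ) : ℝ) + (1 - Int.fract x * (phi - 1)) := by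
    rw [Int.fract]; push_cast
    linear_combination (n : ℝ) * phi_mul_phi_sub_one
  rw [key, Int.floor_intCast_add, add_eq_left, Int.floor_eq_zero_iff]
  constructor <;> nlinarith [one_lt_phi, phi_lt_two]

lemma floor_floor_natCast_mul_phi_add_mul_phi (n : ℕ) :
    ⌊((⌊(n : ℝ) * phi⌋ + n : ℤ) : ℝ) * phi⌋ = 2 * ⌊(n : ℝ) * phi⌋ + n := by
  set x := (n : ℝ) * phi
  have hf := Int.fract_nonneg x
  have hf1 := Int.fract_lt_one x
  have key : ((⌊x⌋ + n : ℤ) : ℝ) * phi = ((2 * ⌊x⌋ + n : ℤ) : ℝ) + Int.fract x * (2 - phi) := by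
    rw [Int.fract]; push_cast
    linear_combination (n : ℝ) * phi_mul_phi_sub_one
  rw [key, Int.floor_intCast_add, add_eq_left, Int.floor_eq_zero_iff]
  constructor <;> nlinarith [one_lt_phi, phi_lt_two]

/-- If `V(m) = p⌊mφ⌋ + qm + r` for all `m ≥ 1`, `A(n) = ⌊nφ⌋` and `B(n) = ⌊nφ²⌋`, then
`V(A(n)) = (p+q)⌊nφ⌋ + pn + (r−p)` and `V(B(n)) = (2p+q)⌊nφ⌋ + (p+q)n + r` for `n ≥ 1`. -/
theorem gbs_compose_wythoff (p q r : ℤ) (V : ℤ → ℤ)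
    (hV : ∀ m : ℤ, 1 ≤ m → V m = p * ⌊(m : ℝ) * phi⌋ + q * m + r)
    (n : ℕ) (hn : 1 ≤ n) :
    V ⌊(n : ℝ) * phi⌋ = (p + q) * ⌊(n : ℝ) * phi⌋ + p * (n : ℤ) + (r - p) ∧
    V ⌊(n : ℝ) * phi ^ 2⌋ = (2 * p + q) * ⌊(n : ℝ) * phi⌋ + (p + q) * (n : ℤ) + r := by
  have hn0 : n ≠ 0 := Nat.one_le_iff_ne_zero.mp hn
  have ha := one_le_floor_natCast_mul_phi hn0
  constructor
  · rw [hV _ ha, floor_floor_natCast_mul_phi_mul_phi hn0]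
    ring
  · rw [floor_natCast_mul_phi_sq, hV _ (by omega), floor_floor_natCast_mul_phi_add_mul_phi]
    ring
end

section
/- Let p, q, r, s, t, u be integers with p ≠ 0 and s ≠ 0, and define V(n) = p⌊nφ⌋ + qn + r and W(n) = s⌊nφ⌋ + tn + u for n ≥ 1. If V and W are injective and complementary, then there exist integers x and y such that s = p·x and 5p²x² − 4x = y². -/
/-- Two sequences (indexed by `n ≥ 1`) are complementary if their value sets are
disjoint and their union is the set of positive integers. -/
def ComplementaryPair (V W : ℕ → ℤ) : Prop :=
  Disjoint {z : ℤ | ∃ n : ℕ, 1 ≤ n ∧ V n = z} {z : ℤ | ∃ n : ℕ, 1 ≤ n ∧ W n = z} ∧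
  {z : ℤ | ∃ n : ℕ, 1 ≤ n ∧ V n = z} ∪ {z : ℤ | ∃ n : ℕ, 1 ≤ n ∧ W n = z} = {z : ℤ | 0 < z}

open Set Filter Real goldenRatio

theorem int_eq_zero_of_mul_goldenRatio_add_eq_zero {a b : ℤ} (h : (a : ℝ) * φ + b = 0) :
    a = 0 ∧ b = 0 := by
  obtain rfl : a = 0 := by
    by_contra ha
    exact ((goldenRatio_irrational.intCast_mul ha).add_intCast b).ne_zero h
  exact ⟨rfl, by simpa using h⟩

theorem int_eqs_of_mul_goldenRatio_add_mul_eq_one {a b c d : ℤ}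
    (h : ((a : ℝ) * φ + b) * (c * φ + d) = 1) :
    a * c + a * d + b * c = 0 ∧ a * c + b * d = 1 := by
  have := int_eq_zero_of_mul_goldenRatio_add_eq_zero (a := a * c + a * d + b * c)
    (b := a * c + b * d - 1) (by push_cast; linear_combination h - a * c * goldenRatio_sq)
  omega

/-- The norm `N(aφ + b) = (aφ + b)(aψ + b)` of `ℤ[φ]`. -/
def goldenNorm (a b : ℤ) : ℤ := b ^ 2 + a * b - a ^ 2

section GoldenUnits

variable {a b c d : ℤ}

theorem goldenNorm_mul_goldenNorm_eq_one (h₁ : a * c + a * d + b * c = 0)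
    (h₂ : a * c + b * d = 1) : goldenNorm a b * goldenNorm c d = 1 := by
  unfold goldenNorm
  linear_combination (a * c + b * d + 1 + (a * c + a * d + b * c)) * h₂ +
      (1 - (a * c + a * d + b * c)) * h₁

theorem mul_goldenNorm_eq_neg (h₁ : a * c + a * d + b * c = 0)
    (h₂ : a * c + b * d = 1) : c * goldenNorm a b = -a := by
  unfold goldenNorm
  linear_combination b * h₁ - a * h₂

theorem exists_pell_of_unit_equations (h₁ : a * c + a * d + b * c = 0)
    (h₂ : a * c + b * d = 1) : ∃ x y : ℤ, c = a * x ∧ 5 * a ^ 2 * x ^ 2 - 4 * x = y ^ 2 := by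
  set D := goldenNorm a b with hD
  have hunit : IsUnit D := IsUnit.of_mul_eq_one _ (goldenNorm_mul_goldenNorm_eq_one h₁ h₂)
  have hsq : D ^ 2 = 1 := by rcases Int.isUnit_iff.mp hunit with h | h <;> rw [h] <;> norm_num
  refine ⟨-D, a + 2 * b, ?_, ?_⟩
  · linear_combination (-c) * hsq + D * mul_goldenNorm_eq_neg h₁ h₂
  · rw [hD, goldenNorm] at hsq ⊢
    linear_combination 5 * a ^ 2 * hsq

end GoldenUnits

theorem nonneg_of_eventually_nonneg_mul_add {α c : ℝ} (h : ∀ᶠ n : ℕ in atTop, 0 ≤ α * n + c) :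
    0 ≤ α := by
  by_contra! hα
  have hlim : Tendsto (fun n : ℕ => α * n + c) atTop atBot :=
    tendsto_atBot_add_const_right _ c (tendsto_natCast_atTop_atTop.const_mul_atTop_of_neg hα)
  obtain ⟨n, hn, hneg⟩ := (h.and (hlim.eventually_lt_atBot 0)).exists
  linarith

theorem eq_zero_of_forall_abs_mul_le {δ C : ℝ} (h : ∀ M : ℕ, |δ * M| ≤ C) : δ = 0 := by
  have hδ : 0 ≤ δ := nonneg_of_eventually_nonneg_mul_add (c := C) <|
    .of_forall fun M => by linarith [(abs_le.1 (h M)).1]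
  have hnegδ : 0 ≤ -δ := nonneg_of_eventually_nonneg_mul_add (c := C) <|
    .of_forall fun M => by linarith [(abs_le.1 (h M)).2]
  linarith

theorem abs_mul_floor_add_sub_mul_le (a b r : ℤ) (θ : ℝ) (n : ℕ) :
    |((a * ⌊n * θ⌋ + b * n + r : ℤ) : ℝ) - (a * θ + b) * n| ≤ |(a : ℝ)| + |(r : ℝ)| := by
  have hfract : |(a : ℝ) * Int.fract (n * θ)| ≤ |(a : ℝ)| := by
    rw [abs_mul, abs_of_nonneg (Int.fract_nonneg ((n : ℝ) * θ))]
    exact mul_le_of_le_one_right (abs_nonneg _) (Int.fract_lt_one _).le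
  calc |((a * ⌊n * θ⌋ + b * n + r : ℤ) : ℝ) - (a * θ + b) * n|
      = |-((a : ℝ) * Int.fract (n * θ)) + r| := by rw [Int.fract]; push_cast; ring_nf
    _ ≤ |(a : ℝ)| + |(r : ℝ)| := by
      grw [abs_add_le, abs_neg, hfract]

section Counting

variable {f : ℕ → ℤ} {α c : ℝ}

theorem ncard_image_Ici_inter_Icc (hinj : InjOn f (Ici 1)) (hpos : ∀ n ≥ 1, 0 < f n) (M : ℕ) :
    (f '' Ici 1 ∩ Icc 1 M).ncard = {n | 1 ≤ n ∧ f n ≤ M}.ncard := by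
  have himage : f '' Ici 1 ∩ Icc 1 M = f '' {n | 1 ≤ n ∧ f n ≤ M} := by
    ext z
    constructor
    · rintro ⟨⟨n, hn, rfl⟩, -, hM⟩
      exact ⟨n, ⟨hn, hM⟩, rfl⟩
    · rintro ⟨n, ⟨hn, hM⟩, rfl⟩
      exact ⟨⟨n, hn, rfl⟩, hpos n hn, hM⟩
  rw [himage, (hinj.mono fun n hn => hn.1).ncard_image]

theorem abs_ncard_setOf_le_sub_div_le (hα : 0 < α) (hdev : ∀ n ≥ 1, |(f n : ℝ) - α * n| ≤ c)
    (M : ℕ) : |({n | 1 ≤ n ∧ f n ≤ M}.ncard : ℝ) - M / α| ≤ c / α + 1 := by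
  have hc : 0 ≤ c := (abs_nonneg _).trans (hdev 1 le_rfl)
  set A := {n | 1 ≤ n ∧ f n ≤ M}
  have hA_sub : A ⊆ Icc 1 ⌊(M + c) / α⌋₊ := by
    rintro n ⟨hn, hM⟩
    refine ⟨hn, Nat.le_floor ?_⟩
    rw [le_div_iff₀ hα]
    have : (f n : ℝ) ≤ M := by exact_mod_cast hM
    linarith [(abs_le.mp (hdev n hn)).1]
  have hsub_A : Icc 1 ⌊(M - c) / α⌋₊ ⊆ A := by
    rintro n ⟨hn, hnL⟩
    refine ⟨hn, ?_⟩
    have hnα : n * α ≤ M - c := by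
      rw [← le_div_iff₀ hα]
      exact (Nat.le_floor_iff' (by omega)).1 hnL
    have : (f n : ℝ) ≤ M := by linarith [(abs_le.mp (hdev n hn)).2]
    exact_mod_cast this
  have hupper : (A.ncard : ℝ) ≤ (M + c) / α := by
    have hcard : A.ncard ≤ ⌊(M + c) / α⌋₊ := by
      simpa using ncard_le_ncard hA_sub
    exact (Nat.cast_le.2 hcard).trans (Nat.floor_le (by positivity))
  have hlower : (M - c) / α - 1 ≤ A.ncard := by
    have hcard : ⌊(M - c) / α⌋₊ ≤ A.ncard := by
      simpa using ncard_le_ncard hsub_A ((finite_Icc _ _).subset hA_sub)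
    exact (Nat.sub_one_lt_floor _).le.trans (Nat.cast_le.2 hcard)
  rw [add_div] at hupper
  rw [sub_div] at hlower
  exact abs_le.2 ⟨by linarith, by linarith⟩

theorem nonneg_of_abs_sub_mul_le (hpos : ∀ n ≥ 1, 0 < f n)
    (hdev : ∀ n ≥ 1, |(f n : ℝ) - α * n| ≤ c) : 0 ≤ α :=
  nonneg_of_eventually_nonneg_mul_add (c := c) <| eventually_atTop.2 ⟨1, fun n hn => by
    have : (0 : ℝ) < f n := by exact_mod_cast hpos n hn
    linarith [(abs_le.1 (hdev n hn)).2]⟩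

end Counting

namespace ComplementaryPair

variable {V W : ℕ → ℤ}

theorem iff_image : ComplementaryPair V W ↔
    Disjoint (V '' Ici 1) (W '' Ici 1) ∧ V '' Ici 1 ∪ W '' Ici 1 = Ioi 0 :=
  Iff.rfl

theorem symm (h : ComplementaryPair V W) : ComplementaryPair W V :=
  ⟨h.1.symm, by rw [union_comm]; exact h.2⟩

theorem pos_left (h : ComplementaryPair V W) {n : ℕ} (hn : 1 ≤ n) : 0 < V n := by
  have : V n ∈ V '' Ici 1 ∪ W '' Ici 1 := Or.inl ⟨n, hn, rfl⟩
  rwa [(iff_image.1 h).2] at this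

theorem ncard_add_ncard (h : ComplementaryPair V W) (M : ℕ) :
    (V '' Ici 1 ∩ Icc 1 M).ncard + (W '' Ici 1 ∩ Icc 1 M).ncard = M := by
  obtain ⟨hdisj, hunion⟩ := iff_image.1 h
  rw [← ncard_union_eq (hdisj.mono inter_subset_left inter_subset_left)
    ((finite_Icc _ _).subset inter_subset_right) ((finite_Icc _ _).subset inter_subset_right),
    ← union_inter_distrib_right, hunion, inter_eq_right.2 fun z hz => hz.1, ← Finset.coe_Icc,
    ncard_coe_finset, Int.card_Icc]
  omega

theorem inv_add_inv_eq_one (h : ComplementaryPair V W) {α β c d : ℝ} (hα : 0 < α) (hβ : 0 < β)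
    (hVinj : InjOn V (Ici 1)) (hWinj : InjOn W (Ici 1))
    (hV : ∀ n ≥ 1, |(V n : ℝ) - α * n| ≤ c) (hW : ∀ n ≥ 1, |(W n : ℝ) - β * n| ≤ d) :
    α⁻¹ + β⁻¹ = 1 := by
  suffices h0 : 1 - α⁻¹ - β⁻¹ = 0 by linarith
  refine eq_zero_of_forall_abs_mul_le (C := c / α + 1 + (d / β + 1)) fun M => ?_
  have hVM := abs_ncard_setOf_le_sub_div_le hα hV M
  have hWM := abs_ncard_setOf_le_sub_div_le hβ hW M
  rw [← ncard_image_Ici_inter_Icc hVinj (fun n => h.pos_left) M] at hVM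
  rw [← ncard_image_Ici_inter_Icc hWinj (fun n => h.symm.pos_left) M] at hWM
  set nV := (V '' Ici 1 ∩ Icc 1 M).ncard
  set nW := (W '' Ici 1 ∩ Icc 1 M).ncard
  have hsum : (nV : ℝ) + nW = M := by exact_mod_cast h.ncard_add_ncard M
  calc |(1 - α⁻¹ - β⁻¹) * M| = |((nV : ℝ) - M / α) + (nW - M / β)| := by rw [← hsum]; ring_nf
    _ ≤ _ := (abs_add_le _ _).trans (add_le_add hVM hWM)

end ComplementaryPair

/-- If `V = pA + q·Id + r` and `W = sA + t·Id + u` (with `A(n) = ⌊nφ⌋`, `p ≠ 0`, `s ≠ 0`)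
are injective and complementary, then `p` divides `s`, say `s = px`, and `p` is a solution
of the generalized Pell equation `5p²x² − 4x = y²`. -/
theorem complementary_pair_pell (p q r s t u : ℤ) (hp : p ≠ 0) (hs : s ≠ 0)
    (V W : ℕ → ℤ)
    (hV : ∀ n : ℕ, 1 ≤ n → V n = p * ⌊(n : ℝ) * phi⌋ + q * n + r)
    (hW : ∀ n : ℕ, 1 ≤ n → W n = s * ⌊(n : ℝ) * phi⌋ + t * n + u)
    (hVinj : ∀ m n : ℕ, 1 ≤ m → 1 ≤ n → V m = V n → m = n)
    (hWinj : ∀ m n : ℕ, 1 ≤ m → 1 ≤ n → W m = W n → m = n)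
    (hcomp : ComplementaryPair V W) :
    ∃ x y : ℤ, s = p * x ∧ 5 * p ^ 2 * x ^ 2 - 4 * x = y ^ 2 := by
  set α : ℝ := p * φ + q
  set β : ℝ := s * φ + t
  have hVdev : ∀ n ≥ 1, |(V n : ℝ) - α * n| ≤ |(p : ℝ)| + |(r : ℝ)| := fun n hn => by
    rw [hV n hn]; exact abs_mul_floor_add_sub_mul_le p q r φ n
  have hWdev : ∀ n ≥ 1, |(W n : ℝ) - β * n| ≤ |(s : ℝ)| + |(u : ℝ)| := fun n hn => by
    rw [hW n hn]; exact abs_mul_floor_add_sub_mul_le s t u φ n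
  have hα : 0 < α := (nonneg_of_abs_sub_mul_le (fun n => hcomp.pos_left) hVdev).lt_of_ne'
    fun h => hp (int_eq_zero_of_mul_goldenRatio_add_eq_zero h).1
  have hβ : 0 < β := (nonneg_of_abs_sub_mul_le (fun n => hcomp.symm.pos_left) hWdev).lt_of_ne'
    fun h => hs (int_eq_zero_of_mul_goldenRatio_add_eq_zero h).1
  have hinv : α⁻¹ + β⁻¹ = 1 := hcomp.inv_add_inv_eq_one hα hβ
    (fun m hm n hn => hVinj m n hm hn) (fun m hm n hn => hWinj m n hm hn) hVdev hWdev
  have hunit : ((p : ℝ) * φ + (q - 1 : ℤ)) * ((s : ℝ) * φ + (t - 1 : ℤ)) = 1 := by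
    have : (α - 1) * (β - 1) = 1 := by
      field_simp at hinv
      linear_combination -hinv
    push_cast
    linear_combination this
  obtain ⟨h₁, h₂⟩ := int_eqs_of_mul_goldenRatio_add_mul_eq_one hunit
  exact exists_pell_of_unit_equations h₁ h₂
end

section
/- The three sequences V₁(n) = ⌊nφ⌋ + n − 1, V₂(n) = 2⌊nφ⌋ + n, and V₃(n) = ⌊nφ⌋ + n, each for n ≥ 1, form a complementary triple: their value sets are pairwise disjoint and their union is the set of all positive integers. -/
/-- Three sequences (indexed by `n ≥ 1`) form a complementary triple if their value sets
are pairwise disjoint and their union is the set of positive integers. -/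
def ComplementaryTriple (V₁ V₂ V₃ : ℕ → ℤ) : Prop :=
  Disjoint {z : ℤ | ∃ n : ℕ, 1 ≤ n ∧ V₁ n = z} {z : ℤ | ∃ n : ℕ, 1 ≤ n ∧ V₂ n = z} ∧
  Disjoint {z : ℤ | ∃ n : ℕ, 1 ≤ n ∧ V₁ n = z} {z : ℤ | ∃ n : ℕ, 1 ≤ n ∧ V₃ n = z} ∧
  Disjoint {z : ℤ | ∃ n : ℕ, 1 ≤ n ∧ V₂ n = z} {z : ℤ | ∃ n : ℕ, 1 ≤ n ∧ V₃ n = z} ∧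
  {z : ℤ | ∃ n : ℕ, 1 ≤ n ∧ V₁ n = z} ∪ {z : ℤ | ∃ n : ℕ, 1 ≤ n ∧ V₂ n = z} ∪
    {z : ℤ | ∃ n : ℕ, 1 ≤ n ∧ V₃ n = z} = {z : ℤ | 0 < z}

open Set Function Real
open scoped goldenRatio symmDiff

namespace Set

variable {α : Type*}

theorem partition_image_refine {P : Set α} {a b : α → α} (ha : Injective a)
    (hdisj : Disjoint (a '' P) (b '' P)) (hunion : a '' P ∪ b '' P = P) :
    Disjoint (a '' (a '' P)) (a '' (b '' P)) ∧ Disjoint (a '' (a '' P)) (b '' P) ∧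
      Disjoint (a '' (b '' P)) (b '' P) ∧ a '' (a '' P) ∪ a '' (b '' P) ∪ b '' P = P := by
  refine ⟨(disjoint_image_iff ha).mpr hdisj,
    hdisj.mono_left (image_mono (subset_union_left.trans hunion.le)),
    hdisj.mono_left (image_mono (subset_union_right.trans hunion.le)), ?_⟩
  rw [← image_union, hunion, hunion]

theorem disjoint_and_union_eq_of_symmDiff_eq {A B C : Set α} (hA : A ⊆ C) (h : A ∆ B = C) :
    Disjoint A B ∧ A ∪ B = C := by
  have hdisj : Disjoint A B := (le_symmDiff_iff_left A B).mp (h ▸ hA)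
  exact ⟨hdisj, hdisj.symmDiff_eq_sup.symm.trans h⟩

end Set

theorem beattySeq_add_one (r : ℝ) (k : ℤ) : beattySeq (r + 1) k = beattySeq r k + k := by
  simp only [beattySeq, mul_add_one, Int.floor_add_intCast]

theorem beattySeq_pos {r : ℝ} (hr : 1 ≤ r) {k : ℤ} (hk : 0 < k) : 0 < beattySeq r k :=
  Int.floor_pos.mpr (one_le_mul_of_one_le_of_one_le (by exact_mod_cast hk) hr)

theorem beattySeq_strictMono {r : ℝ} (hr : 1 ≤ r) : StrictMono (beattySeq r) := by
  intro m n hmn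
  have hmn' : (m : ℝ) + 1 ≤ n := by exact_mod_cast hmn
  calc ⌊m * r⌋ < ⌊m * r + 1⌋ := by rw [Int.floor_add_one]; omega
    _ ≤ ⌊n * r⌋ := Int.floor_le_floor (by nlinarith)

namespace Real

theorem holderConjugate_goldenRatio : HolderConjugate φ (φ + 1) := by
  rw [holderConjugate_iff_eq_conjExponent one_lt_goldenRatio,
    eq_div_iff (sub_ne_zero.mpr one_lt_goldenRatio.ne')]
  linear_combination goldenRatio_sq

theorem rayleigh_goldenRatio :
    Disjoint (beattySeq φ '' Ioi 0) (beattySeq (φ + 1) '' Ioi 0) ∧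
      beattySeq φ '' Ioi 0 ∪ beattySeq (φ + 1) '' Ioi 0 = Ioi 0 := by
  refine disjoint_and_union_eq_of_symmDiff_eq ?_
    (goldenRatio_irrational.beattySeq_symmDiff_beattySeq_pos holderConjugate_goldenRatio)
  rintro _ ⟨k, hk, rfl⟩
  exact beattySeq_pos one_lt_goldenRatio.le hk

theorem fract_intCast_mul_goldenRatio_pos {k : ℤ} (hk : k ≠ 0) : 0 < Int.fract (k * φ) :=
  Int.fract_pos.mpr ((goldenRatio_irrational.intCast_mul hk).ne_int _)

theorem beattySeq_goldenRatio_mul_goldenRatio (k : ℤ) :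
    (beattySeq φ k : ℝ) * φ = beattySeq φ k + k - Int.fract (k * φ) * (φ - 1) := by
  rw [Int.fract, beattySeq]
  linear_combination (k : ℝ) * goldenRatio_sq

theorem beattySeq_goldenRatio_beattySeq {k : ℤ} (hk : k ≠ 0) :
    beattySeq φ (beattySeq φ k) = beattySeq φ k + k - 1 := by
  have hf := fract_intCast_mul_goldenRatio_pos hk
  have hf₁ := Int.fract_lt_one ((k : ℝ) * φ)
  rw [beattySeq, Int.floor_eq_iff, beattySeq_goldenRatio_mul_goldenRatio]
  push_cast
  constructor <;> nlinarith [one_lt_goldenRatio, goldenRatio_lt_two]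

theorem beattySeq_goldenRatio_beattySeq_add_one {k : ℤ} (hk : k ≠ 0) :
    beattySeq φ (beattySeq (φ + 1) k) = 2 * beattySeq φ k + k := by
  have hf := fract_intCast_mul_goldenRatio_pos hk
  have hf₁ := Int.fract_lt_one ((k : ℝ) * φ)
  have hkφ : (k : ℝ) * φ = beattySeq φ k + Int.fract (k * φ) := (Int.floor_add_fract _).symm
  rw [beattySeq_add_one, beattySeq, Int.floor_eq_iff]
  push_cast
  rw [add_mul, beattySeq_goldenRatio_mul_goldenRatio]
  constructor <;> nlinarith [one_lt_goldenRatio, goldenRatio_lt_two]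

end Real

theorem setOf_exists_pos_eq_image {V : ℕ → ℤ} {W : ℤ → ℤ} (h : ∀ n : ℕ, 1 ≤ n → V n = W n) :
    {z : ℤ | ∃ n : ℕ, 1 ≤ n ∧ V n = z} = W '' Ioi 0 := by
  ext z
  constructor
  · rintro ⟨n, hn, rfl⟩
    exact ⟨n, by simp only [mem_Ioi]; omega, (h n hn).symm⟩
  · rintro ⟨k, hk, rfl⟩
    rw [mem_Ioi] at hk
    lift k to ℕ using hk.le
    exact ⟨k, by omega, h k (by omega)⟩

theorem ComplementaryTriple.of_image_Ioi {V₁ V₂ V₃ : ℕ → ℤ} {W₁ W₂ W₃ : ℤ → ℤ}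
    (h₁ : ∀ n : ℕ, 1 ≤ n → V₁ n = W₁ n) (h₂ : ∀ n : ℕ, 1 ≤ n → V₂ n = W₂ n)
    (h₃ : ∀ n : ℕ, 1 ≤ n → V₃ n = W₃ n)
    (h : Disjoint (W₁ '' Ioi 0) (W₂ '' Ioi 0) ∧ Disjoint (W₁ '' Ioi 0) (W₃ '' Ioi 0) ∧
      Disjoint (W₂ '' Ioi 0) (W₃ '' Ioi 0) ∧ W₁ '' Ioi 0 ∪ W₂ '' Ioi 0 ∪ W₃ '' Ioi 0 = Ioi 0) :
    ComplementaryTriple V₁ V₂ V₃ := by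
  rwa [ComplementaryTriple, setOf_exists_pos_eq_image h₁, setOf_exists_pos_eq_image h₂,
    setOf_exists_pos_eq_image h₃]

/-- The first classical complementary triple:
`(⌊nφ⌋ + n − 1, 2⌊nφ⌋ + n, ⌊nφ⌋ + n)` for `n ≥ 1`. -/
theorem first_classical_triple :
    ComplementaryTriple
      (fun n => ⌊(n : ℝ) * phi⌋ + n - 1)
      (fun n => 2 * ⌊(n : ℝ) * phi⌋ + n)
      (fun n => ⌊(n : ℝ) * phi⌋ + n) := by
  have hφ : phi = φ := rfl
  have h := partition_image_refine (beattySeq_strictMono one_lt_goldenRatio.le).injective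
    rayleigh_goldenRatio.1 rayleigh_goldenRatio.2
  rw [image_image, image_image] at h
  refine ComplementaryTriple.of_image_Ioi (fun n hn => ?_) (fun n hn => ?_) (fun n _ => ?_) h
  · rw [beattySeq_goldenRatio_beattySeq (by omega)]
    simp only [hφ, beattySeq, Int.cast_natCast]
  · rw [beattySeq_goldenRatio_beattySeq_add_one (by omega)]
    simp only [hφ, beattySeq, Int.cast_natCast]
  · rw [beattySeq_add_one]
    simp only [hφ, beattySeq, Int.cast_natCast]
end
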